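/- arXiv:1903.00051 — 2 statements merged into one kernel-verified Lean document; each statement's English description precedes it below -/
import Mathlib

section
/- Let A be a uniform algebra on a compact Hausdorff space Y and let p ∈ Y be a p-point of A. Then every f in the maximal ideal I_p = {f ∈ A : f(p) = 0} factors as f = f₁ f₂ with f₁, f₂ ∈ I_p. -/
open ContinuousMap

/-- A peak set of a uniform algebra `A` on `Y`: a closed set `P` such that some `f ∈ A`
equals `1` on `P` and has modulus strictly less than `1` off `P`. -/
def IsPeakSet {Y : Type*} [TopologicalSpace Y] (A : Subalgebra ℂ C(Y, ℂ)) (P : Set Y) : Prop :=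
  IsClosed P ∧ ∃ f ∈ A, (∀ y ∈ P, f y = 1) ∧ ∀ y ∉ P, ‖f y‖ < 1

/-- A `p`-point of `A`: a point whose singleton is an intersection of peak sets of `A`.
The strong boundary of `A` is the set of all `p`-points. -/
def IsPPoint {Y : Type*} [TopologicalSpace Y] (A : Subalgebra ℂ C(Y, ℂ)) (p : Y) : Prop :=
  ∃ Ps : Set (Set Y), (∀ P ∈ Ps, IsPeakSet A P) ∧ ⋂₀ Ps = {p}

/-!
Peak functions `u_k ∈ A` with `u_k p = 1`, `|u_k| ≤ 1` and `|u_k| ≤ 1/2` where `|f| ≥ 4⁻ᵏ` give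
`h = ∑ 2⁻⁽ᵏ⁺¹⁾ (1 - u_k) ∈ A` with `h p = 0`, `Re h ≥ 0` and `|f| ≤ C |h|²`. As `Re (h + ε) ≥ ε`,
a Neumann series inverts `h + ε` in `A`, and `|f / (h + ε) - f / h| ≤ C ε`; so `f / h` is a
uniform limit of elements of `A`, hence lies in `A`, and `f = h · (f / h)` with both factors
vanishing at `p`.
-/

def PeaksOn {Y : Type*} [TopologicalSpace Y] (f : C(Y, ℂ)) (P : Set Y) : Prop :=
  (∀ y ∈ P, f y = 1) ∧ ∀ y ∉ P, ‖f y‖ < 1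

section PeakSets

variable {Y : Type*} [TopologicalSpace Y] {A : Subalgebra ℂ C(Y, ℂ)}

theorem PeaksOn.norm_le_one {f : C(Y, ℂ)} {P : Set Y} (hf : PeaksOn f P) (y : Y) :
    ‖f y‖ ≤ 1 := by
  by_cases hy : y ∈ P
  · simp [hf.1 y hy]
  · exact (hf.2 y hy).le

theorem PeaksOn.mul {f g : C(Y, ℂ)} {P Q : Set Y} (hf : PeaksOn f P) (hg : PeaksOn g Q) :
    PeaksOn (f * g) (P ∩ Q) := by
  refine ⟨fun y ⟨hP, hQ⟩ => by simp [hf.1 y hP, hg.1 y hQ], fun y hy => ?_⟩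
  rw [mul_apply, norm_mul]
  rcases not_and_or.1 hy with hP | hQ
  · exact mul_lt_one_of_nonneg_of_lt_one_left (norm_nonneg _) (hf.2 y hP) (hg.norm_le_one y)
  · exact mul_lt_one_of_nonneg_of_lt_one_right (hf.norm_le_one y) (norm_nonneg _) (hg.2 y hQ)

theorem IsPeakSet.univ : IsPeakSet A Set.univ :=
  ⟨isClosed_univ, 1, A.one_mem, fun _ _ => rfl, fun y hy => absurd (Set.mem_univ y) hy⟩

theorem IsPeakSet.inter {P Q : Set Y} (hP : IsPeakSet A P) (hQ : IsPeakSet A Q) :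
    IsPeakSet A (P ∩ Q) := by
  obtain ⟨hPc, f, hfA, hf⟩ := hP
  obtain ⟨hQc, g, hgA, hg⟩ := hQ
  exact ⟨hPc.inter hQc, f * g, A.mul_mem hfA hgA, PeaksOn.mul hf hg⟩

theorem IsPeakSet.biInter_finset {ι : Type*} (s : Finset ι) {P : ι → Set Y}
    (hP : ∀ i ∈ s, IsPeakSet A (P i)) : IsPeakSet A (⋂ i ∈ s, P i) := by
  classical
  induction s using Finset.induction_on with
  | empty => simpa using IsPeakSet.univ (A := A)
  | insert i s _ ih =>
    rw [Finset.set_biInter_insert]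
    exact (hP i (s.mem_insert_self i)).inter (ih fun j hj => hP j (Finset.mem_insert_of_mem hj))

theorem IsPPoint.exists_isPeakSet_subset [CompactSpace Y] {p : Y} (hp : IsPPoint A p)
    {U : Set Y} (hU : IsOpen U) (hpU : p ∈ U) : ∃ P, IsPeakSet A P ∧ p ∈ P ∧ P ⊆ U := by
  obtain ⟨Ps, hPs, hInter⟩ := hp
  have hp_mem : ∀ P ∈ Ps, p ∈ P := fun P hP =>
    Set.sInter_subset_of_mem hP (hInter ▸ Set.mem_singleton p)
  have hdisj : Uᶜ ∩ ⋂ P : Ps, (P : Set Y) = ∅ := by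
    rw [← Set.sInter_eq_iInter, hInter, Set.inter_singleton_eq_empty]
    exact not_not.2 hpU
  obtain ⟨t, ht⟩ := hU.isClosed_compl.isCompact.elim_finite_subfamily_closed _
    (fun P : Ps => (hPs P P.2).1) hdisj
  refine ⟨⋂ P ∈ t, (P : Set Y), IsPeakSet.biInter_finset t fun (P : Ps) _ => hPs P P.2,
    Set.mem_biInter fun (P : Ps) _ => hp_mem P P.2, fun y hy => ?_⟩
  by_contra hyU
  exact (Set.eq_empty_iff_forall_notMem.1 ht) y ⟨hyU, hy⟩

theorem IsPPoint.exists_norm_le_of_notMem [CompactSpace Y] {p : Y} (hp : IsPPoint A p)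
    {U : Set Y} (hU : IsOpen U) (hpU : p ∈ U) {r : ℝ} (hr : 0 < r) :
    ∃ u ∈ A, u p = 1 ∧ (∀ y, ‖u y‖ ≤ 1) ∧ ∀ y ∉ U, ‖u y‖ ≤ r := by
  obtain ⟨P, ⟨-, g, hgA, hg : PeaksOn g P⟩, hpP, hPU⟩ := hp.exists_isPeakSet_subset hU hpU
  obtain ⟨δ, hδ, hgδ⟩ := hU.isClosed_compl.isCompact.exists_forall_le' (a := 0)
    (f := fun y => 1 - ‖g y‖) (continuous_const.sub g.continuous.norm).continuousOn
    (fun y hy => sub_pos.2 (hg.2 y fun h => hy (hPU h)))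
  obtain ⟨N, hN⟩ := exists_pow_lt_of_lt_one hr (show 1 - δ < 1 by linarith)
  refine ⟨g ^ N, pow_mem hgA N, by simp [hg.1 p hpP], fun y => ?_, fun y hy => ?_⟩
  · simpa using pow_le_one₀ (norm_nonneg _) (hg.norm_le_one y)
  · have hgy : ‖g y‖ ≤ 1 - δ := by linarith [hgδ y hy]
    calc ‖(g ^ N) y‖ = ‖g y‖ ^ N := by simp
      _ ≤ (1 - δ) ^ N := pow_le_pow_left₀ (norm_nonneg _) hgy N
      _ ≤ r := hN.le

end PeakSets

theorem le_mul_sq_of_forall_pow_le {a b M : ℝ} (ha : 0 ≤ a) (haM : a ≤ M)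
    (h : ∀ k : ℕ, (4 : ℝ)⁻¹ ^ k ≤ a → (2 : ℝ)⁻¹ ^ (k + 2) ≤ b) :
    a ≤ (64 + 16 * M) * b ^ 2 := by
  rcases ha.eq_or_lt with rfl | ha
  · positivity
  rcases le_or_gt a 1 with ha1 | ha1
  · obtain ⟨n, hlt, hle⟩ := exists_nat_pow_near_of_lt_one ha ha1 (by norm_num : (0 : ℝ) < 4⁻¹)
      (by norm_num)
    have hb : (2 : ℝ)⁻¹ ^ (n + 3) ≤ b := h (n + 1) hlt.le
    have hb2 : (4 : ℝ)⁻¹ ^ (n + 3) ≤ b ^ 2 := by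
      calc (4 : ℝ)⁻¹ ^ (n + 3) = ((2 : ℝ)⁻¹ ^ (n + 3)) ^ 2 := by
            rw [← pow_mul, mul_comm, pow_mul]; norm_num
        _ ≤ b ^ 2 := pow_le_pow_left₀ (by positivity) hb 2
    calc a ≤ (4 : ℝ)⁻¹ ^ n := hle
      _ = 64 * (4 : ℝ)⁻¹ ^ (n + 3) := by rw [pow_add]; ring
      _ ≤ (64 + 16 * M) * b ^ 2 := by nlinarith [sq_nonneg b]
  · have hb : (2 : ℝ)⁻¹ ^ 2 ≤ b := h 0 (by rw [pow_zero]; exact ha1.le)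
    have hb2 : 16⁻¹ ≤ b ^ 2 := by nlinarith
    nlinarith [mul_le_mul_of_nonneg_left hb2 (by linarith : 0 ≤ M)]

namespace Complex

theorem norm_le_norm_add_ofReal {w : ℂ} (hw : 0 ≤ w.re) {ε : ℝ} (hε : 0 ≤ ε) :
    ‖w‖ ≤ ‖w + ε‖ := by
  rw [← sq_le_sq₀ (norm_nonneg _) (norm_nonneg _), Complex.sq_norm, Complex.sq_norm,
    normSq_apply, normSq_apply]
  simp only [add_re, ofReal_re, add_im, ofReal_im, add_zero]
  nlinarith

theorem norm_one_sub_ofReal_mul_lt_one {z : ℂ} {c : ℝ} (hc : 0 < c)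
    (h : c * ‖z‖ ^ 2 < 2 * z.re) : ‖1 - c * z‖ < 1 := by
  rw [← sq_lt_one_iff₀ (norm_nonneg _), Complex.sq_norm, normSq_apply]
  rw [Complex.sq_norm, normSq_apply] at h
  simp only [sub_re, one_re, re_ofReal_mul, sub_im, one_im, im_ofReal_mul]
  nlinarith

theorem norm_div_add_ofReal_sub_div_le {z w : ℂ} {C ε : ℝ} (hC : 0 ≤ C) (hε : 0 < ε)
    (hw : 0 ≤ w.re) (hz : ‖z‖ ≤ C * ‖w‖ ^ 2) : ‖z / (w + ε) - z / w‖ ≤ C * ε := by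
  rcases eq_or_ne w 0 with rfl | hw0
  · obtain rfl : z = 0 := by simpa using hz
    simpa using mul_nonneg hC hε.le
  have hwpos : 0 < ‖w‖ := norm_pos_iff.2 hw0
  have hwε : ‖w‖ ≤ ‖w + ε‖ := norm_le_norm_add_ofReal hw hε.le
  have hwε0 : w + ε ≠ 0 := norm_pos_iff.1 (hwpos.trans_le hwε)
  have hdiff : z / (w + ε) - z / w = -(ε * z) / ((w + ε) * w) := by
    field_simp; ring
  rw [hdiff, norm_div, norm_neg, norm_mul, norm_mul, norm_real, Real.norm_of_nonneg hε.le,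
    div_le_iff₀ (by positivity)]
  calc ε * ‖z‖ ≤ ε * (C * ‖w‖ ^ 2) := by gcongr
    _ = C * ε * (‖w‖ * ‖w‖) := by ring
    _ ≤ C * ε * (‖w + ε‖ * ‖w‖) := by gcongr

end Complex

theorem IsClosed.exists_mul_eq_one_of_norm_one_sub_lt_one {R S : Type*} [NormedRing R]
    [CompleteSpace R] [SetLike S R] [SubringClass S R] {s : S} (hs : IsClosed (s : Set R))
    {x : R} (hx : x ∈ s) (h : ‖1 - x‖ < 1) : ∃ y ∈ s, x * y = 1 :=
  ⟨∑' i, (1 - x) ^ i, tsum_mem hs fun i => pow_mem (sub_mem (one_mem s) hx) i, by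
    simpa using mul_neg_geom_series (1 - x) h⟩

theorem IsClosed.exists_coe_eq_of_forall_dist_le {Y E : Type*} [TopologicalSpace Y]
    [CompactSpace Y] [PseudoMetricSpace E] {S : Set C(Y, E)} (hS : IsClosed S) {F : Y → E}
    (hF : ∀ δ > 0, ∃ g ∈ S, ∀ y, dist (g y) (F y) ≤ δ) : ∃ g ∈ S, ⇑g = F := by
  choose g hgS hg using fun n : ℕ => hF (1 / (n + 1)) Nat.one_div_pos_of_nat
  have hunif : TendstoUniformly (fun n => ⇑(g n)) F Filter.atTop := by
    refine Metric.tendstoUniformly_iff.2 fun δ hδ => ?_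
    obtain ⟨N, hN⟩ := exists_nat_one_div_lt hδ
    refine Filter.eventually_atTop.2 ⟨N, fun n hn y => ?_⟩
    rw [dist_comm]
    calc dist (g n y) (F y) ≤ 1 / (n + 1) := hg n y
      _ ≤ 1 / (N + 1) := by gcongr
      _ < δ := hN
  let G : C(Y, E) := ⟨F, hunif.continuous (Filter.Frequently.of_forall fun n => (g n).continuous)⟩
  have hG : Filter.Tendsto g Filter.atTop (nhds G) :=
    ContinuousMap.tendsto_iff_tendstoUniformly.2 hunif
  exact ⟨G, hS.mem_of_tendsto hG (Filter.Eventually.of_forall hgS), rfl⟩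

section ClosedSubalgebra

variable {Y : Type*} [TopologicalSpace Y] [CompactSpace Y] {A : Subalgebra ℂ C(Y, ℂ)}

theorem exists_mul_eq_one_of_le_re (hA : IsClosed (A : Set C(Y, ℂ))) {v : C(Y, ℂ)}
    (hv : v ∈ A) {ε : ℝ} (hε : 0 < ε) (hre : ∀ y, ε ≤ (v y).re) : ∃ b ∈ A, v * b = 1 := by
  set c : ℝ := ε / (‖v‖ ^ 2 + 1)
  have hc : 0 < c := by positivity
  have hcv : c * ‖v‖ ^ 2 < ε := by
    rw [div_mul_eq_mul_div, div_lt_iff₀ (by positivity)]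
    nlinarith
  have hnorm : ‖1 - (c : ℂ) • v‖ < 1 := by
    refine (ContinuousMap.norm_lt_iff _ one_pos).2 fun y => ?_
    refine Complex.norm_one_sub_ofReal_mul_lt_one hc ?_
    calc c * ‖v y‖ ^ 2 ≤ c * ‖v‖ ^ 2 := by gcongr; exact v.norm_coe_le_norm y
      _ < ε := hcv
      _ ≤ 2 * (v y).re := by linarith [hre y]
  obtain ⟨b, hbA, hb⟩ :=
    hA.exists_mul_eq_one_of_norm_one_sub_lt_one (A.smul_mem hv (c : ℂ)) hnorm
  exact ⟨(c : ℂ) • b, A.smul_mem hbA _, by rwa [mul_smul_comm, ← smul_mul_assoc]⟩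

theorem exists_mem_eq_mul_of_norm_le_mul_sq (hA : IsClosed (A : Set C(Y, ℂ))) {f h : C(Y, ℂ)}
    (hf : f ∈ A) (hh : h ∈ A) (hre : ∀ y, 0 ≤ (h y).re) {C : ℝ} (hC : 0 ≤ C)
    (hfh : ∀ y, ‖f y‖ ≤ C * ‖h y‖ ^ 2) : ∃ g ∈ A, f = h * g ∧ ∀ y, g y = f y / h y := by
  have happrox : ∀ δ > 0, ∃ g ∈ A, ∀ y, dist (g y) (f y / h y) ≤ δ := by
    intro δ hδ
    set ε := δ / (C + 1)
    have hε : 0 < ε := by positivity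
    obtain ⟨b, hbA, hb⟩ := exists_mul_eq_one_of_le_re hA (A.add_mem hh (A.algebraMap_mem ε))
      hε fun y => by simpa using hre y
    refine ⟨f * b, A.mul_mem hf hbA, fun y => ?_⟩
    have hby : b y = (h y + ε)⁻¹ :=
      (inv_eq_of_mul_eq_one_right (by simpa using congr($hb y))).symm
    rw [dist_eq_norm, mul_apply, hby, ← div_eq_mul_inv]
    calc ‖f y / (h y + ε) - f y / h y‖ ≤ C * ε :=
          Complex.norm_div_add_ofReal_sub_div_le hC hε (hre y) (hfh y)
      _ ≤ δ := by
          rw [mul_div_assoc', div_le_iff₀ (by positivity)]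
          nlinarith
  obtain ⟨g, hgA, hg⟩ := hA.exists_coe_eq_of_forall_dist_le happrox
  refine ⟨g, hgA, ContinuousMap.ext fun y => ?_, congrFun hg⟩
  rw [mul_apply, hg]
  rcases eq_or_ne (h y) 0 with h0 | h0
  · simpa [h0] using hfh y
  · exact (mul_div_cancel₀ _ h0).symm

theorem exists_mem_le_re_of_norm_le_one (hA : IsClosed (A : Set C(Y, ℂ)))
    {u : ℕ → C(Y, ℂ)} (huA : ∀ k, u k ∈ A) (hu : ∀ k y, ‖u k y‖ ≤ 1) :
    ∃ h ∈ A, (∀ y, (∀ k, u k y = 1) → h y = 0) ∧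
      ∀ y k, (2 : ℝ)⁻¹ ^ (k + 1) * (1 - (u k y).re) ≤ (h y).re := by
  set w : ℕ → C(Y, ℂ) := fun k => (((2 : ℝ)⁻¹ ^ (k + 1) : ℝ) : ℂ) • (1 - u k)
  have hw_apply : ∀ k y, w k y = (((2 : ℝ)⁻¹ ^ (k + 1) : ℝ) : ℂ) * (1 - u k y) := by
    simp [w]
  have hw_re : ∀ k y, (w k y).re = (2 : ℝ)⁻¹ ^ (k + 1) * (1 - (u k y).re) := by
    intro k y
    rw [hw_apply, Complex.re_ofReal_mul, Complex.sub_re, Complex.one_re]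
  have hw_re_nonneg : ∀ k y, 0 ≤ (w k y).re := fun k y => by
    rw [hw_re]
    have := (Complex.re_le_norm (u k y)).trans (hu k y)
    have : (0 : ℝ) ≤ 1 - (u k y).re := by linarith
    positivity
  have hw_norm : ∀ k, ‖w k‖ ≤ (2 : ℝ)⁻¹ ^ k := fun k => by
    refine (ContinuousMap.norm_le _ (by positivity)).2 fun y => ?_
    rw [hw_apply, norm_mul, Complex.norm_real, Real.norm_of_nonneg (by positivity)]
    calc (2 : ℝ)⁻¹ ^ (k + 1) * ‖1 - u k y‖ ≤ (2 : ℝ)⁻¹ ^ (k + 1) * 2 := by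
          gcongr
          calc ‖1 - u k y‖ ≤ ‖(1 : ℂ)‖ + ‖u k y‖ := norm_sub_le _ _
            _ ≤ 2 := by rw [norm_one]; linarith [hu k y]
      _ = (2 : ℝ)⁻¹ ^ k := by rw [pow_succ]; ring
  have hsum : Summable w := Summable.of_norm_bounded
    (summable_geometric_of_lt_one (by norm_num) (by norm_num)) hw_norm
  have hsum_apply : ∀ y, HasSum (fun k => w k y) ((∑' k, w k) y) := fun y =>
    hsum.hasSum.mapL (ContinuousMap.evalCLM ℂ y)
  refine ⟨∑' k, w k, tsum_mem hA fun k => A.smul_mem (A.sub_mem A.one_mem (huA k)) _,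
    fun y hy => (hsum_apply y).unique (by simp [hw_apply, hy]), fun y k => ?_⟩
  rw [← hw_re]
  exact le_hasSum (Complex.hasSum_re (hsum_apply y)) k fun j _ => hw_re_nonneg j y

theorem IsPPoint.exists_mem_norm_le_mul_sq (hA : IsClosed (A : Set C(Y, ℂ))) {p : Y}
    (hp : IsPPoint A p) {f : C(Y, ℂ)} (hfp : f p = 0) :
    ∃ h ∈ A, h p = 0 ∧ (∀ y, 0 ≤ (h y).re) ∧ ∀ y, ‖f y‖ ≤ (64 + 16 * ‖f‖) * ‖h y‖ ^ 2 := by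
  have hpeak : ∀ k : ℕ, ∃ u ∈ A, u p = 1 ∧ (∀ y, ‖u y‖ ≤ 1) ∧
      ∀ y, (4 : ℝ)⁻¹ ^ k ≤ ‖f y‖ → ‖u y‖ ≤ 2⁻¹ := fun k => by
    simpa using hp.exists_norm_le_of_notMem (U := {y | ‖f y‖ < (4 : ℝ)⁻¹ ^ k})
      (isOpen_lt f.continuous.norm continuous_const) (by simp [hfp]) (by norm_num)
  choose u huA hup hu1 hu_half using hpeak
  obtain ⟨h, hhA, hh0, hre⟩ := exists_mem_le_re_of_norm_le_one hA huA hu1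
  have hre_pow : ∀ y k, (4 : ℝ)⁻¹ ^ k ≤ ‖f y‖ → (2 : ℝ)⁻¹ ^ (k + 2) ≤ (h y).re :=
    fun y k hk => by
      have := (Complex.re_le_norm (u k y)).trans (hu_half k y hk)
      calc (2 : ℝ)⁻¹ ^ (k + 2) ≤ (2 : ℝ)⁻¹ ^ (k + 1) * (1 - (u k y).re) := by
            rw [pow_succ _ (k + 1)]; gcongr; linarith
        _ ≤ (h y).re := hre y k
  have hre_nonneg : ∀ y, 0 ≤ (h y).re := fun y => by
    have := (Complex.re_le_norm (u 0 y)).trans (hu1 0 y)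
    exact le_trans (by nlinarith) (hre y 0)
  refine ⟨h, hhA, hh0 p hup, hre_nonneg, fun y => ?_⟩
  calc ‖f y‖ ≤ (64 + 16 * ‖f‖) * (h y).re ^ 2 :=
        le_mul_sq_of_forall_pow_le (norm_nonneg _) (f.norm_coe_le_norm y) (hre_pow y)
    _ ≤ (64 + 16 * ‖f‖) * ‖h y‖ ^ 2 := by
        gcongr
        · exact hre_nonneg y
        · exact Complex.re_le_norm _

end ClosedSubalgebra

theorem stmt2_general {Y : Type*} [TopologicalSpace Y] [CompactSpace Y]
    (A : Subalgebra ℂ C(Y, ℂ)) (hA : IsClosed (A : Set C(Y, ℂ)))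
    (p : Y) (hp : IsPPoint A p)
    (f : C(Y, ℂ)) (hf : f ∈ A) (hfp : f p = 0) :
    ∃ f₁ ∈ A, ∃ f₂ ∈ A, f₁ p = 0 ∧ f₂ p = 0 ∧ f = f₁ * f₂ := by
  obtain ⟨h, hhA, hhp, hre, hfh⟩ := hp.exists_mem_norm_le_mul_sq hA hfp
  obtain ⟨g, hgA, hfg, hg⟩ :=
    exists_mem_eq_mul_of_norm_le_mul_sq hA hf hhA hre (by positivity) hfh
  exact ⟨h, hhA, g, hgA, hhp, by rw [hg, hfp, zero_div], hfg⟩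

/-- If `A` is a uniform algebra on a compact Hausdorff space `Y` and
`p ∈ Y` is a `p`-point of `A`, then every `f` in the maximal ideal
`I_p = {f ∈ A : f p = 0}` factors as `f = f₁ · f₂` with `f₁, f₂ ∈ I_p`. -/
theorem stmt2 {Y : Type*} [TopologicalSpace Y] [CompactSpace Y] [T2Space Y]
    (A : Subalgebra ℂ C(Y, ℂ)) (hA : IsClosed (A : Set C(Y, ℂ)))
    (hsep : ∀ y z : Y, y ≠ z → ∃ f ∈ A, f y ≠ f z)
    (p : Y) (hp : IsPPoint A p)
    (f : C(Y, ℂ)) (hf : f ∈ A) (hfp : f p = 0) :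
    ∃ f₁ ∈ A, ∃ f₂ ∈ A, f₁ p = 0 ∧ f₂ p = 0 ∧ f = f₁ * f₂ :=
  stmt2_general A hA p hp f hf hfp
end

section
/- Let ρ₀ ∈ E₀(Ŝ). Then every f ∈ A(Ŝ) satisfies |f(ρ₀)| ≤ sup_{χ ∈ X} |f(χ)|; that is, the modulus of f at ρ₀ is bounded by the maximum of |f| over the character group X. -/
open Complex Topology Set

/-- The compact semigroup `Ŝ` of semicharacters of a discrete abelian monoid `S`:
nonzero homomorphisms into the multiplicative semigroup of the closed unit disc,
realized as the set of functions `ψ : S → ℂ` with `ψ 1 = 1`, multiplicative, and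
of modulus at most one, endowed with the topology of pointwise convergence. -/
def Shat (S : Type*) [CommMonoid S] : Set (S → ℂ) :=
  {ψ | ψ 1 = 1 ∧ (∀ s t, ψ (s * t) = ψ s * ψ t) ∧ ∀ s, ‖ψ s‖ ≤ 1}

/-- The group `X` of characters of `S`: semicharacters of modulus one. -/
def charGroup (S : Type*) [CommMonoid S] : Set (S → ℂ) :=
  {ψ | ψ ∈ Shat S ∧ ∀ s, ‖ψ s‖ = 1}

/-- `Ŝ₊`: the set of nonnegative semicharacters of `S`. -/
def ShatPos (S : Type*) [CommMonoid S] : Set (S → ℂ) :=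
  {ψ | ψ ∈ Shat S ∧ ∀ s, (ψ s).im = 0 ∧ 0 ≤ (ψ s).re}

/-- `E(Ŝ)`: the set of idempotent semicharacters (taking only the values `0` and `1`). -/
def idemSC (S : Type*) [CommMonoid S] : Set (S → ℂ) :=
  {ψ | ψ ∈ Shat S ∧ ∀ s, ψ s = 0 ∨ ψ s = 1}

/-- The modulus `|ψ|` of a semicharacter. -/
noncomputable def scMod {S : Type*} (ψ : S → ℂ) : S → ℂ :=
  fun s => (‖ψ s‖ : ℂ)

/-- The power `ρ^z` of a nonnegative semicharacter `ρ` (with `0^z := 0`). -/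
noncomputable def scPow {S : Type*} (ρ : S → ℂ) (z : ℂ) : S → ℂ :=
  fun s => if ρ s = 0 then 0 else ρ s ^ z

/-- A function `F` on `Ŝ` is generalized analytic on `Ŝ ∖ X` if for all
`ρ ∈ Ŝ₊ ∖ X` and `ψ ∈ Ŝ ∖ X` the map `z ↦ F (ρ^z ψ)` is analytic on the open
right half-plane and continuous at `0` along `(0, ∞)`. -/
def GenAnalytic (S : Type*) [CommMonoid S] (F : (S → ℂ) → ℂ) : Prop :=
  ∀ ρ ∈ ShatPos S \ charGroup S, ∀ ψ ∈ Shat S \ charGroup S,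
    DifferentiableOn ℂ (fun z : ℂ => F (scPow ρ z * ψ)) {z : ℂ | 0 < z.re} ∧
    ContinuousWithinAt (fun t : ℝ => F (scPow ρ (t : ℂ) * ψ)) (Set.Ioi (0 : ℝ)) 0

/-- Membership in the uniform algebra `A(Ŝ)`: continuous on `Ŝ` and generalized
analytic on `Ŝ ∖ X`. -/
def MemA (S : Type*) [CommMonoid S] (F : (S → ℂ) → ℂ) : Prop :=
  ContinuousOn F (Shat S) ∧ GenAnalytic S F

/-- Peak sets of the algebra `A(Ŝ)`. -/
def IsPeakSetA (S : Type*) [CommMonoid S] (P : Set (S → ℂ)) : Prop :=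
  P ⊆ Shat S ∧ IsClosed P ∧
    ∃ f, MemA S f ∧ (∀ ψ ∈ P, f ψ = 1) ∧ ∀ ψ ∈ Shat S \ P, ‖f ψ‖ < 1

/-- `p`-points of the algebra `A(Ŝ)`: points of `Ŝ` that are intersections of peak sets. -/
def IsPPointA (S : Type*) [CommMonoid S] (p : S → ℂ) : Prop :=
  p ∈ Shat S ∧
    ∃ Ps : Set (Set (S → ℂ)), (∀ P ∈ Ps, IsPeakSetA S P) ∧ ⋂₀ Ps = {p}

/-- The strong boundary `Γ` of `A(Ŝ)`: the set of all `p`-points. -/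
def strongBoundary (S : Type*) [CommMonoid S] : Set (S → ℂ) :=
  {ψ | IsPPointA S ψ}

/-- The coset `ρX` of the character group. -/
def cosetX (S : Type*) [CommMonoid S] (ρ : S → ℂ) : Set (S → ℂ) :=
  {φ | ∃ χ ∈ charGroup S, φ = ρ * χ}

/-- `E₀(Ŝ)`: idempotents `ρ₀` admitting `ρ₁ ∈ Ŝ₊` with `ρ₁ = 1` on `S(ρ₀)` and
`0 < ρ₁ < 1` off `S(ρ₀)`. -/
def E0 (S : Type*) [CommMonoid S] : Set (S → ℂ) :=
  {ρ₀ | ρ₀ ∈ idemSC S ∧ ∃ ρ₁ ∈ ShatPos S,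
    (∀ s, ρ₀ s ≠ 0 → ρ₁ s = 1) ∧ ∀ s, ρ₀ s = 0 → 0 < (ρ₁ s).re ∧ (ρ₁ s).re < 1}

/-- `θ`: the indicator function of `{e}`. -/
noncomputable def theta (S : Type*) [CommMonoid S] : S → ℂ :=
  ({1} : Set S).indicator 1

/-- A closed boundary of `A(Ŝ)`: a closed subset of `Ŝ` on which every function of
`A(Ŝ)` attains its maximum modulus over `Ŝ`. -/
def IsClosedBoundaryA (S : Type*) [CommMonoid S] (B : Set (S → ℂ)) : Prop :=
  B ⊆ Shat S ∧ IsClosed B ∧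
    ∀ f, MemA S f → ∃ ψ ∈ B, ∀ φ ∈ Shat S, ‖f φ‖ ≤ ‖f ψ‖

/-- The Shilov boundary of `A(Ŝ)`: the smallest closed boundary. -/
def shilovA (S : Type*) [CommMonoid S] : Set (S → ℂ) :=
  ⋂₀ {B | IsClosedBoundaryA S B}

/-- An ideal of the semigroup `S`: a nonempty proper subset stable under multiplication
by `S`. -/
def IsIdealS (S : Type*) [CommMonoid S] (I : Set S) : Prop :=
  I.Nonempty ∧ I ≠ Set.univ ∧ ∀ s : S, ∀ a ∈ I, s * a ∈ I

/-- A simple ideal: an ideal whose complement is a subsemigroup. -/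
def IsSimpleIdealS (S : Type*) [CommMonoid S] (I : Set S) : Prop :=
  IsIdealS S I ∧ ∀ a b : S, a ∉ I → b ∉ I → a * b ∉ I

/-!
Take `ρ₁` from the definition of `E₀(Ŝ)`. Along the half-plane `Re z ≥ 0` the semicharacters
`ρ₁^z` stay in `Ŝ`, the function `z ↦ f (ρ₁^z)` is bounded and holomorphic for `Re z > 0`, and on
the imaginary axis `ρ₁^{iy}` is a character. Phragmén–Lindelöf bounds `|f (ρ₁^z)|` by
`sup_X |f|`, and as `t → ∞` along the reals `ρ₁^t → ρ₀` pointwise, because `ρ₁ = 1` on `S(ρ₀)`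
and `0 < ρ₁ < 1` off it.
-/

open Filter

lemma norm_le_of_bounded_right_half_plane {E : Type*} [NormedAddCommGroup E] [NormedSpace ℂ E]
    {g : ℂ → E} {C M : ℝ} (hd : DiffContOnCl ℂ g {z | 0 < z.re})
    (hM : ∀ z : ℂ, 0 ≤ z.re → ‖g z‖ ≤ M) (him : ∀ y : ℝ, ‖g (y * I)‖ ≤ C)
    {z : ℂ} (hz : 0 ≤ z.re) : ‖g z‖ ≤ C := by
  refine PhragmenLindelof.right_half_plane_of_bounded_on_real hd
    ⟨1, one_lt_two, 0, Asymptotics.IsBigO.of_bound M ?_⟩ ⟨M, ?_⟩ him hz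
  · exact eventually_inf_principal.2 (.of_forall fun w hw => by simpa using hM w (le_of_lt hw))
  · exact eventually_map.2 (eventually_ge_atTop 0 |>.mono fun x hx => hM x (by simpa using hx))

lemma scPow_add {S : Type*} (ρ : S → ℂ) (z w : ℂ) : scPow ρ (z + w) = scPow ρ z * scPow ρ w := by
  ext s
  by_cases hs : ρ s = 0 <;> simp [scPow, hs, cpow_add]

lemma continuous_scPow {S : Type*} (ρ : S → ℂ) : Continuous (scPow ρ) := by
  refine continuous_pi fun s => ?_
  by_cases hs : ρ s = 0
  · simp only [scPow, hs, if_true]; exact continuous_const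
  · simp only [scPow, hs, if_false]; exact continuous_id.const_cpow (.inl hs)

section Semicharacters

variable {S : Type*} [CommMonoid S]

lemma isCompact_Shat : IsCompact (Shat S) := by
  have hsub : Shat S ⊆ univ.pi fun _ : S => Metric.closedBall (0 : ℂ) 1 :=
    fun ψ hψ s _ => by simpa using hψ.2.2 s
  have hclosed : IsClosed (Shat S) := by
    simp only [Shat, ofPred_and, ofPred_forall]
    refine (isClosed_eq (continuous_apply 1) continuous_const).inter
      ((isClosed_iInter fun s => isClosed_iInter fun t => ?_).inter
        (isClosed_iInter fun s => ?_))
    · exact isClosed_eq (continuous_apply _) ((continuous_apply s).mul (continuous_apply t))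
    · exact isClosed_le (continuous_apply s).norm continuous_const
  exact (isCompact_univ_pi fun _ => isCompact_closedBall 0 1).of_isClosed_subset hclosed hsub

lemma bddAbove_norm_image_charGroup {f : (S → ℂ) → ℂ} (hf : ContinuousOn f (Shat S)) :
    BddAbove ((fun χ => ‖f χ‖) '' charGroup S) := by
  obtain ⟨M, hM⟩ := isCompact_Shat.exists_bound_of_continuousOn hf
  exact ⟨M, by rintro _ ⟨χ, hχ, rfl⟩; exact hM χ hχ.1⟩

variable {ρ : S → ℂ}

lemma ofReal_re_of_mem_ShatPos (hρ : ρ ∈ ShatPos S) (s : S) : ((ρ s).re : ℂ) = ρ s :=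
  Complex.ext rfl (by simp [(hρ.2 s).1])

lemma re_le_one_of_mem_ShatPos (hρ : ρ ∈ ShatPos S) (s : S) : (ρ s).re ≤ 1 :=
  (Complex.re_le_norm _).trans (hρ.1.2.2 s)

lemma norm_scPow_of_mem_ShatPos (hρ : ρ ∈ ShatPos S) {s : S} (hs : ρ s ≠ 0) (z : ℂ) :
    ‖scPow ρ z s‖ = (ρ s).re ^ z.re := by
  have hpos : 0 < (ρ s).re :=
    (hρ.2 s).2.lt_of_ne fun h => hs (by rw [← ofReal_re_of_mem_ShatPos hρ, ← h, ofReal_zero])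
  rw [scPow, if_neg hs, ← ofReal_re_of_mem_ShatPos hρ, norm_cpow_eq_rpow_re_of_pos hpos, ofReal_re]

lemma scPow_mem_Shat (hρ : ρ ∈ ShatPos S) {z : ℂ} (hz : 0 ≤ z.re) : scPow ρ z ∈ Shat S := by
  refine ⟨by simp [scPow, hρ.1.1], fun s t => ?_, fun s => ?_⟩
  · by_cases hs : ρ s = 0
    · simp [scPow, hρ.1.2.1, hs]
    by_cases ht : ρ t = 0
    · simp [scPow, hρ.1.2.1, ht]
    simp only [scPow, hρ.1.2.1, mul_eq_zero, hs, ht, or_self, if_false]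
    rw [← ofReal_re_of_mem_ShatPos hρ s, ← ofReal_re_of_mem_ShatPos hρ t]
    exact mul_cpow_ofReal_nonneg (hρ.2 s).2 (hρ.2 t).2 z
  · by_cases hs : ρ s = 0
    · simp [scPow, hs]
    rw [norm_scPow_of_mem_ShatPos hρ hs]
    exact Real.rpow_le_one (hρ.2 s).2 (re_le_one_of_mem_ShatPos hρ s) hz

lemma scPow_mul_I_mem_charGroup (hρ : ρ ∈ ShatPos S) (hne : ∀ s, ρ s ≠ 0) (y : ℝ) :
    scPow ρ (y * I) ∈ charGroup S :=
  ⟨scPow_mem_Shat hρ (by simp), fun s => by simp [norm_scPow_of_mem_ShatPos hρ (hne s)]⟩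

lemma scPow_notMem_charGroup (hρ : ρ ∈ ShatPos S \ charGroup S) {z : ℂ} (hz : 0 < z.re) :
    scPow ρ z ∉ charGroup S := by
  obtain ⟨s, hs⟩ : ∃ s, ‖ρ s‖ ≠ 1 := by simpa [charGroup, hρ.1.1] using hρ.2
  intro hX
  by_cases h0 : ρ s = 0
  · simpa [scPow, h0] using hX.2 s
  have hlt : (ρ s).re < 1 := by
    refine (re_le_one_of_mem_ShatPos hρ.1 s).lt_of_ne fun h => hs ?_
    rw [← ofReal_re_of_mem_ShatPos hρ.1, h, ofReal_one, norm_one]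
  have hnorm := hX.2 s
  rw [norm_scPow_of_mem_ShatPos hρ.1 h0] at hnorm
  exact (Real.rpow_lt_one (hρ.1.2 s).2 hlt hz).ne hnorm

lemma tendsto_scPow_atTop (hρ : ρ ∈ ShatPos S) :
    Tendsto (fun t : ℝ => scPow ρ t) atTop (𝓝 fun s => if ρ s = 1 then 1 else 0) := by
  refine tendsto_pi_nhds.2 fun s => ?_
  by_cases h1 : ρ s = 1
  · simp [scPow, h1]
  by_cases h0 : ρ s = 0
  · simp [scPow, h0]
  have hlt : (ρ s).re < 1 := by
    refine (re_le_one_of_mem_ShatPos hρ s).lt_of_ne fun h => h1 ?_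
    rw [← ofReal_re_of_mem_ShatPos hρ, h, ofReal_one]
  have hpow : Tendsto (fun t : ℝ => (((ρ s).re ^ t : ℝ) : ℂ)) atTop (𝓝 0) := by
    simpa [Function.comp_def] using (continuous_ofReal.tendsto 0).comp
      (tendsto_rpow_atTop_of_base_lt_one _ (by linarith [(hρ.2 s).2]) hlt)
  simp only [scPow, h0, h1, if_false]
  refine hpow.congr fun t => ?_
  rw [ofReal_cpow (hρ.2 s).2, ofReal_re_of_mem_ShatPos hρ]

end Semicharacters

section GeneralizedAnalytic

variable {S : Type*} [CommMonoid S] {ρ : S → ℂ} {f : (S → ℂ) → ℂ}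

/- Generalized analyticity only concerns `ψ ∉ X`; taking `ψ = ρ^ε` and shifting by `ε` gives
analyticity of `z ↦ f (ρ^z)` itself. -/
lemma differentiableOn_comp_scPow (hf : GenAnalytic S f) (hρ : ρ ∈ ShatPos S \ charGroup S) :
    DifferentiableOn ℂ (fun z => f (scPow ρ z)) {z | 0 < z.re} := by
  intro w hw
  set ε : ℝ := w.re / 2
  have hε : 0 < ε := half_pos hw
  have hψ : scPow ρ ε ∈ Shat S \ charGroup S :=
    ⟨scPow_mem_Shat hρ.1 (by simpa using hε.le), scPow_notMem_charGroup hρ (by simpa using hε)⟩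
  have hshift : DifferentiableOn ℂ (fun z => f (scPow ρ (z - ε + ε))) {z | ε < z.re} := by
    have := (hf ρ hρ _ hψ).1.comp (s := {z | ε < z.re})
      (differentiableOn_id.sub_const (ε : ℂ)) fun z hz => show 0 < (z - ε).re by simpa using hz
    simpa only [Function.comp_def, id, ← scPow_add] using this
  simp only [sub_add_cancel] at hshift
  exact (hshift.differentiableAt ((isOpen_lt continuous_const continuous_re).mem_nhds
    (show ε < w.re from half_lt_self hw))).differentiableWithinAt

lemma norm_comp_scPow_le_sSup (hf : MemA S f) (hρ : ρ ∈ ShatPos S \ charGroup S)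
    (hne : ∀ s, ρ s ≠ 0) {z : ℂ} (hz : 0 ≤ z.re) :
    ‖f (scPow ρ z)‖ ≤ sSup ((fun χ => ‖f χ‖) '' charGroup S) := by
  obtain ⟨M, hM⟩ := isCompact_Shat.exists_bound_of_continuousOn hf.1
  have hcont : ContinuousOn (fun z => f (scPow ρ z)) {z | 0 ≤ z.re} :=
    hf.1.comp (continuous_scPow ρ).continuousOn fun _ hz => scPow_mem_Shat hρ.1 hz
  refine norm_le_of_bounded_right_half_plane
    ⟨differentiableOn_comp_scPow hf.2 hρ,
      hcont.mono (closure_lt_subset_le continuous_const continuous_re)⟩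
    (fun z hz => hM _ (scPow_mem_Shat hρ.1 hz))
    (fun y => le_csSup (bddAbove_norm_image_charGroup hf.1)
      ⟨_, scPow_mul_I_mem_charGroup hρ.1 hne y, rfl⟩) hz

end GeneralizedAnalytic

lemma exists_ShatPos_of_mem_E0 {S : Type*} [CommMonoid S] {ρ₀ : S → ℂ} (h : ρ₀ ∈ E0 S)
    (hX : ρ₀ ∉ charGroup S) : ∃ ρ ∈ ShatPos S \ charGroup S,
      (∀ s, ρ s ≠ 0) ∧ ρ₀ = fun s => if ρ s = 1 then 1 else 0 := by
  obtain ⟨⟨hρ₀, hidem⟩, ρ, hρ, hone, hlt⟩ := h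
  obtain ⟨s₀, hs₀⟩ : ∃ s, ρ₀ s = 0 := by
    by_contra! hne
    exact hX ⟨hρ₀, fun s => by simp [(hidem s).resolve_left (hne s)]⟩
  refine ⟨ρ, ⟨hρ, fun hρX => ?_⟩, fun s hs => ?_, funext fun s => ?_⟩
  · have hnorm := hρX.2 s₀
    rw [← ofReal_re_of_mem_ShatPos hρ, norm_real, Real.norm_of_nonneg (hρ.2 s₀).2] at hnorm
    exact (hlt s₀ hs₀).2.ne hnorm
  · rcases hidem s with h0 | h1
    · simpa [hs] using (hlt s h0).1
    · simpa [hs] using hone s (by simp [h1])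
  · rcases hidem s with h0 | h1
    · rw [h0, if_neg fun h1 => by simpa [h1] using (hlt s h0).2]
    · rw [h1, if_pos (hone s (by simp [h1]))]

theorem stmt10_general {S : Type*} [CommMonoid S]
    (ρ₀ : S → ℂ) (h : ρ₀ ∈ E0 S) (f : (S → ℂ) → ℂ) (hf : MemA S f) :
    ‖f ρ₀‖ ≤ sSup ((fun χ => ‖f χ‖) '' charGroup S) := by
  by_cases hX : ρ₀ ∈ charGroup S
  · exact le_csSup (bddAbove_norm_image_charGroup hf.1) ⟨ρ₀, hX, rfl⟩
  obtain ⟨ρ, hρ, hne, rfl⟩ := exists_ShatPos_of_mem_E0 h hX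
  have hmem : ∀ᶠ t : ℝ in atTop, scPow ρ t ∈ Shat S :=
    (eventually_ge_atTop 0).mono fun t ht => scPow_mem_Shat hρ.1 (by simpa using ht)
  have hlim := tendsto_scPow_atTop hρ.1
  have hlimf := (hf.1 _ (isCompact_Shat.isClosed.mem_of_tendsto hlim hmem)).tendsto.comp
    (tendsto_nhdsWithin_iff.2 ⟨hlim, hmem⟩)
  refine le_of_tendsto hlimf.norm ((eventually_ge_atTop 0).mono fun t ht => ?_)
  exact norm_comp_scPow_le_sSup hf hρ hne (by simpa using ht)

/-- For `ρ₀ ∈ E₀(Ŝ)`, every `f ∈ A(Ŝ)` satisfies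
`|f(ρ₀)| ≤ sup_{χ ∈ X} |f(χ)|`. -/
theorem stmt10 {S : Type*} [CommMonoid S] [IsCancelMul S]
    (ρ₀ : S → ℂ) (h : ρ₀ ∈ E0 S) (f : (S → ℂ) → ℂ) (hf : MemA S f) :
    ‖f ρ₀‖ ≤ sSup ((fun χ => ‖f χ‖) '' charGroup S) :=
  stmt10_general ρ₀ h f hf
end
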